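/- β-reduction with sharing preserves typing: if Γ; Δ ⊢ (λx:ω σ. e) e' : φ, then Γ; Δ ⊢ let x:_∅ σ = e' in e : φ, where the let binding is annotated with the empty usage environment. -/

import Mathlib

/-! # Linear Core (λ^π_Δ): syntax and typing -/

abbrev Name := String

inductive Mult : Type
  | one | many | mvar (p : Name)
deriving DecidableEq

inductive Ty : Type
  | data (T : Name) (ms : List Mult)
  | arrow (a : Ty) (π : Mult) (b : Ty)
  | forallM (p : Name) (t : Ty)
  | tensor (a b : Ty)
  | unit
deriving DecidableEq

def Mult.msubst (m : Mult) (p : Name) (π : Mult) : Mult :=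
  match m with
  | .mvar q => if q = p then π else .mvar q
  | m => m

def Ty.msubst : Ty → Name → Mult → Ty
  | .data T ms, p, π => .data T (ms.map (Mult.msubst · p π))
  | .arrow a m b, p, π => .arrow (a.msubst p π) (m.msubst p π) (b.msubst p π)
  | .forallM q t, p, π => if q = p then .forallM q t else .forallM q (t.msubst p π)
  | .tensor a b, p, π => .tensor (a.msubst p π) (b.msubst p π)
  | .unit, _, _ => .unit

/-- An entry of the linear typing context: a (possibly irrelevant, possibly
tagged with a constructor name and linear-field index) linear resource. -/
structure LEntry : Type where
  name : Name
  ty : Ty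
  irr : Bool := false
  tag : Option (Name × Nat) := none
deriving DecidableEq

abbrev LCtx := List LEntry

/-- `[Δ]` : pointwise irrelevant lifting of a linear context. -/
def LCtx.irrelevant (Δ : LCtx) : LCtx := Δ.map fun en => { en with irr := true }

def LCtx.names (Δ : LCtx) : List Name := Δ.map LEntry.name

/-- `Δ[Δrep/x]` : replace the occurrences of `x` in `Δ` by `Δrep`. -/
def LCtx.substVar (Δ : LCtx) (x : Name) (Δrep : LCtx) : LCtx :=
  Δ.foldr (fun en acc => (if en.name = x then Δrep else [en]) ++ acc) []

/-- `u[x/Δ]` : collapse occurrences of the variables of `Δ` in `u` to `x`. -/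
def LCtx.collapse (u : LCtx) (Δ : LCtx) (x : Name) (σ : Ty) : LCtx :=
  if Δ.any (fun d => u.any (fun en => en.name == d.name)) then
    (u.filter (fun en => ! Δ.any (fun d => d.name == en.name))) ++ [⟨x, σ, false, none⟩]
  else u

def LCtx.removeNames (Δ : LCtx) (ns : List Name) : LCtx :=
  Δ.filter (fun en => ! ns.contains en.name)

/-- Flatten a list of linear contexts `Δ₁,…,Δₙ` into one. -/
def LCtx.flats (Δs : List LCtx) : LCtx := Δs.foldr (· ++ ·) []

/-- Entries of the unrestricted context Γ: unrestricted variables,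
Δ-bound variables (annotated with a usage environment) and multiplicity
variables. -/
inductive GEntry : Type
  | unr (x : Name) (σ : Ty)
  | dlt (x : Name) (Δ : LCtx) (σ : Ty)
  | mvar (p : Name)
deriving DecidableEq

abbrev GCtx := List GEntry

/-- `Γ[Δ/x]` : expand occurrences of `x` inside usage environments in `Γ`
into the linear variables of `Δ`. -/
def GCtx.expandVar (Γ : GCtx) (x : Name) (Δ : LCtx) : GCtx :=
  Γ.map fun g => match g with
    | .dlt y u σ => .dlt y (LCtx.substVar u x Δ) σ
    | g => g

/-- `Γ[x/Δ]` : collapse occurrences of the variables of `Δ` inside usage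
environments in `Γ` to the single variable `x`. -/
def GCtx.collapse (Γ : GCtx) (Δ : LCtx) (x : Name) (σx : Ty) : GCtx :=
  Γ.map fun g => match g with
    | .dlt y u σ => .dlt y (LCtx.collapse u Δ x σx) σ
    | g => g

/-- `Γ[·/Δs]_z` : delete the variables of `Δs` from the usage environment
of `z` in `Γ`. -/
def GCtx.zeroUsage (Γ : GCtx) (z : Name) (ns : List Name) : GCtx :=
  Γ.map fun g => match g with
    | .dlt y u σ => if y = z then .dlt y (LCtx.removeNames u ns) σ else .dlt y u σ
    | g => g

/-- Case patterns: wildcard, or a constructor pattern binding fields with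
their multiplicities and types. -/
inductive Pat : Type
  | wild
  | con (K : Name) (fields : List (Name × Mult × Ty))

inductive Expr : Type
  | var (x : Name)
  | con (K : Name) (args : List (Mult × Expr))
  | lam (x : Name) (π : Mult) (σ : Ty) (body : Expr)
  | app (f a : Expr)
  | mlam (p : Name) (body : Expr)
  | mapp (f : Expr) (π : Mult)
  | lett (x : Name) (Δ : LCtx) (σ : Ty) (rhs body : Expr)
  | letrec (binds : List (Name × LCtx × Ty × Expr)) (body : Expr)
  | cse (scrut : Expr) (z : Name) (Δz : LCtx) (σ : Ty) (alts : List (Pat × Expr))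
  | pair (a b : Expr)
  | unit

mutual
/-- Capture-avoiding-enough substitution `e[e'/x]` (stops under shadowing binders). -/
def Expr.subst : Expr → Name → Expr → Expr
  | .var y, x, e' => if y = x then e' else .var y
  | .con K args, x, e' => .con K (substArgs args x e')
  | .lam y π σ b, x, e' => if y = x then .lam y π σ b else .lam y π σ (b.subst x e')
  | .app f a, x, e' => .app (f.subst x e') (a.subst x e')
  | .mlam p b, x, e' => .mlam p (b.subst x e')
  | .mapp f π, x, e' => .mapp (f.subst x e') π
  | .lett y Δ σ r b, x, e' =>
      .lett y Δ σ (r.subst x e') (if y = x then b else b.subst x e')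
  | .letrec binds b, x, e' => .letrec (substBinds binds x e') (b.subst x e')
  | .cse s z Δz σ alts, x, e' =>
      .cse (s.subst x e') z Δz σ (if z = x then alts else substAlts alts x e')
  | .pair a b, x, e' => .pair (a.subst x e') (b.subst x e')
  | .unit, _, _ => .unit

def substArgs : List (Mult × Expr) → Name → Expr → List (Mult × Expr)
  | [], _, _ => []
  | (m, e) :: rest, x, e' => (m, e.subst x e') :: substArgs rest x e'

def substBinds : List (Name × LCtx × Ty × Expr) → Name → Expr → List (Name × LCtx × Ty × Expr)
  | [], _, _ => []
  | (y, Δ, σ, e) :: rest, x, e' => (y, Δ, σ, e.subst x e') :: substBinds rest x e'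

def substAlts : List (Pat × Expr) → Name → Expr → List (Pat × Expr)
  | [], _, _ => []
  | (ρ, e) :: rest, x, e' => (ρ, e.subst x e') :: substAlts rest x e'
end

/-- Iterated substitution. -/
def Expr.substList (e : Expr) (ss : List (Name × Expr)) : Expr :=
  ss.foldl (fun acc s => Expr.subst acc s.1 s.2) e

mutual
/-- Multiplicity substitution `e[π/p]`. -/
def Expr.msubst : Expr → Name → Mult → Expr
  | .var y, _, _ => .var y
  | .con K args, p, π => .con K (msubstArgs args p π)
  | .lam y m σ b, p, π => .lam y (m.msubst p π) (σ.msubst p π) (b.msubst p π)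
  | .app f a, p, π => .app (f.msubst p π) (a.msubst p π)
  | .mlam q b, p, π => if q = p then .mlam q b else .mlam q (b.msubst p π)
  | .mapp f m, p, π => .mapp (f.msubst p π) (m.msubst p π)
  | .lett y Δ σ r b, p, π => .lett y Δ (σ.msubst p π) (r.msubst p π) (b.msubst p π)
  | .letrec binds b, p, π => .letrec (msubstBinds binds p π) (b.msubst p π)
  | .cse s z Δz σ alts, p, π => .cse (s.msubst p π) z Δz (σ.msubst p π) (msubstAlts alts p π)
  | .pair a b, p, π => .pair (a.msubst p π) (b.msubst p π)
  | .unit, _, _ => .unit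

def msubstArgs : List (Mult × Expr) → Name → Mult → List (Mult × Expr)
  | [], _, _ => []
  | (m, e) :: rest, p, π => (m.msubst p π, e.msubst p π) :: msubstArgs rest p π

def msubstBinds : List (Name × LCtx × Ty × Expr) → Name → Mult → List (Name × LCtx × Ty × Expr)
  | [], _, _ => []
  | (y, Δ, σ, e) :: rest, p, π => (y, Δ, σ.msubst p π, e.msubst p π) :: msubstBinds rest p π

def msubstAlts : List (Pat × Expr) → Name → Mult → List (Pat × Expr)
  | [], _, _ => []
  | (ρ, e) :: rest, p, π => (ρ, e.msubst p π) :: msubstAlts rest p π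
end

mutual
/-- Free variables of an expression. -/
def Expr.fv : Expr → List Name
  | .var x => [x]
  | .con _ args => fvArgs args
  | .lam x _ _ b => b.fv.filter (fun n => n ≠ x)
  | .app f a => f.fv ++ a.fv
  | .mlam _ b => b.fv
  | .mapp f _ => f.fv
  | .lett x _ _ r b => r.fv ++ b.fv.filter (fun n => n ≠ x)
  | .letrec binds b => fvBinds binds ++ b.fv
  | .cse s z _ _ alts => s.fv ++ (fvAlts alts).filter (fun n => n ≠ z)
  | .pair a b => a.fv ++ b.fv
  | .unit => []

def fvArgs : List (Mult × Expr) → List Name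
  | [] => []
  | (_, e) :: rest => e.fv ++ fvArgs rest

def fvBinds : List (Name × LCtx × Ty × Expr) → List Name
  | [] => []
  | (_, _, _, e) :: rest => e.fv ++ fvBinds rest

def fvAlts : List (Pat × Expr) → List Name
  | [] => []
  | (_, e) :: rest => e.fv ++ fvAlts rest
end

/-- Weak head normal forms. -/
def Expr.isWHNF : Expr → Prop
  | .lam _ _ _ _ => True
  | .mlam _ _ => True
  | .con _ _ => True
  | .pair _ _ => True
  | .unit => True
  | _ => False

/-- Does a pattern match a (WHNF) expression? -/
def Pat.matchesE : Pat → Expr → Prop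
  | .wild, _ => True
  | .con K fs, .con K' args => K = K' ∧ fs.length = args.length
  | .con _ _, _ => False

/-- Well-formedness of multiplicities: `1`, `ω`, or an in-scope multiplicity variable. -/
inductive MultWF : GCtx → Mult → Prop
  | one {Γ} : MultWF Γ .one
  | many {Γ} : MultWF Γ .many
  | mvar {Γ p} : GEntry.mvar p ∈ Γ → MultWF Γ (.mvar p)

/-- The mode of the case-alternative judgement: scrutinee in WHNF (⇒_WHNF)
or not in WHNF (⇒_NWHNF). Mode-agnostic rules are stated for both modes. -/
inductive AltMode : Type
  | whnf | nwhnf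
deriving DecidableEq

def Pat.linFieldsCount : Pat → Nat
  | .wild => 0
  | .con _ fs => (fs.filter fun f => f.2.1 == Mult.one).length

mutual
/-- The typing judgement `Γ; Δ ⊢ e : σ` of Linear Core. -/
inductive Typed : GCtx → LCtx → Expr → Ty → Prop
  | var1 (Γ : GCtx) (x : Name) (σ : Ty) :
      Typed Γ [⟨x, σ, false, none⟩] (.var x) σ
  | varw {Γ x σ} : GEntry.unr x σ ∈ Γ → Typed Γ [] (.var x) σ
  | vard {Γ x Δ σ} : GEntry.dlt x Δ σ ∈ Γ → Typed Γ Δ (.var x) σ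
  | split {Γ : GCtx} {Δ₁ Δ₂ : LCtx} {e σ} (en : LEntry) (K : Name) (n : Nat) :
      en.tag = none →
      Typed Γ (Δ₁ ++ ((List.range n).map fun i => { en with tag := some (K, i) }) ++ Δ₂) e σ →
      Typed Γ (Δ₁ ++ en :: Δ₂) e σ
  | lamI1 {Γ Δ x σ e φ} :
      Typed Γ (Δ ++ [⟨x, σ, false, none⟩]) e φ →
      Typed Γ Δ (.lam x .one σ e) (.arrow σ .one φ)
  | lamIw {Γ Δ x σ e φ} :
      Typed (Γ ++ [.unr x σ]) Δ e φ →
      Typed Γ Δ (.lam x .many σ e) (.arrow σ .many φ)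
  | lamIp {Γ Δ x σ e φ p} :
      Typed Γ (Δ ++ [⟨x, σ, false, none⟩]) e φ →
      Typed Γ Δ (.lam x (.mvar p) σ e) (.arrow σ (.mvar p) φ)
  | appE1 {Γ Δ₁ Δ₂ e e' σ φ} :
      Typed Γ Δ₁ e (.arrow σ .one φ) → Typed Γ Δ₂ e' σ →
      Typed Γ (Δ₁ ++ Δ₂) (.app e e') φ
  | appEw {Γ Δ e e' σ φ} :
      Typed Γ Δ e (.arrow σ .many φ) → Typed Γ [] e' σ →
      Typed Γ Δ (.app e e') φ
  | appEp {Γ Δ₁ Δ₂ e e' σ φ p} :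
      Typed Γ Δ₁ e (.arrow σ (.mvar p) φ) → Typed Γ Δ₂ e' σ →
      Typed Γ (Δ₁ ++ Δ₂) (.app e e') φ
  | mlamI {Γ Δ p e σ} :
      Typed (Γ ++ [.mvar p]) Δ e σ →
      Typed Γ Δ (.mlam p e) (.forallM p σ)
  | mappE {Γ Δ p e σ π} :
      Typed Γ Δ e (.forallM p σ) → MultWF Γ π →
      Typed Γ Δ (.mapp e π) (Ty.msubst σ p π)
  | unitI {Γ} : Typed Γ [] .unit .unit
  | pairI {Γ Δ₁ Δ₂ a b σ τ} :
      Typed Γ Δ₁ a σ → Typed Γ Δ₂ b τ →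
      Typed Γ (Δ₁ ++ Δ₂) (.pair a b) (.tensor σ τ)
  | lett {Γ Δ Δ' x σ e e' φ} :
      Typed Γ Δ e σ →
      Typed (Γ ++ [.dlt x Δ σ]) (Δ ++ Δ') e' φ →
      Typed Γ (Δ ++ Δ') (.lett x Δ σ e e') φ
  | letrec {Γ : GCtx} {Δ Δ' : LCtx} {binds : List (Name × LCtx × Ty × Expr)} {e' φ} :
      (∀ b ∈ binds, b.2.1 = Δ) →
      (∀ b ∈ binds,
        Typed (Γ ++ binds.map fun bi => GEntry.dlt bi.1 bi.2.1 bi.2.2.1) Δ b.2.2.2 b.2.2.1) →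
      Typed (Γ ++ binds.map fun bi => GEntry.dlt bi.1 bi.2.1 bi.2.2.1) (Δ ++ Δ') e' φ →
      Typed Γ (Δ ++ Δ') (.letrec binds e') φ
  | caseWHNF {Γ : GCtx} {Δ Δ' : LCtx} {e z σ φ alts} (Δs : List LCtx) :
      Expr.isWHNF e →
      TypedWHNF Γ Δ e σ Δs →
      (∀ a ∈ alts, Pat.matchesE a.1 e →
        TypedAlt (Γ ++ [GEntry.dlt z Δ σ]) (Δ ++ Δ') a.1 a.2 z Δs σ φ .whnf) →
      (∀ a ∈ alts, ¬ Pat.matchesE a.1 e →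
        TypedAlt (Γ ++ [GEntry.dlt z (LCtx.irrelevant Δ) σ])
          (LCtx.irrelevant Δ ++ Δ') a.1 a.2 z [LCtx.irrelevant Δ] σ φ .nwhnf) →
      Typed Γ (Δ ++ Δ') (.cse e z Δ σ alts) φ
  | caseNWHNF {Γ : GCtx} {Δ Δ' : LCtx} {e z σ φ alts} :
      ¬ Expr.isWHNF e →
      Typed Γ Δ e σ →
      (∀ a ∈ alts,
        TypedAlt (Γ ++ [GEntry.dlt z (LCtx.irrelevant Δ) σ])
          (LCtx.irrelevant Δ ++ Δ') a.1 a.2 z [LCtx.irrelevant Δ] σ φ .nwhnf) →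
      Typed Γ (LCtx.irrelevant Δ ++ Δ') (.cse e z (LCtx.irrelevant Δ) σ alts) φ

/-- The WHNF typing judgement `Γ; Δ ⊩ e : σ ▷ Δ̄`, splitting the linear
resources among the sub-expressions of an expression in WHNF. -/
inductive TypedWHNF : GCtx → LCtx → Expr → Ty → List LCtx → Prop
  | lam {Γ Δ x π σ e τ} :
      Typed Γ Δ (.lam x π σ e) τ → TypedWHNF Γ Δ (.lam x π σ e) τ [Δ]
  | con {Γ K args τ Δs} :
      ArgsTyped Γ args Δs →
      TypedWHNF Γ (LCtx.flats Δs) (.con K args) τ Δs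

/-- Typing of constructor arguments: unrestricted arguments need the empty
linear context, each linear argument gets its own `Δᵢ`. -/
inductive ArgsTyped : GCtx → List (Mult × Expr) → List LCtx → Prop
  | nil {Γ} : ArgsTyped Γ [] []
  | unr {Γ e σ args Δs} :
      Typed Γ [] e σ → ArgsTyped Γ args Δs → ArgsTyped Γ ((.many, e) :: args) Δs
  | lin {Γ Δ e σ args Δs} :
      Typed Γ Δ e σ → ArgsTyped Γ args Δs → ArgsTyped Γ ((.one, e) :: args) (Δ :: Δs)

/-- The case-alternative judgement `Γ; Δ ⊢ ρ ⇒ e :^z_{Δ̄} σ ⇒ φ` of Linear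
Core (the `Δ̄ : List LCtx` is the annotated scrutinee environment: the split
`Δ₁,…,Δₙ` in WHNF mode, the singleton `[[Δ]]` in non-WHNF mode). -/
inductive TypedAlt : GCtx → LCtx → Pat → Expr → Name → List LCtx → Ty → Ty → AltMode → Prop
  | wild {Γ Δ e z Δs σ φ m} :
      Typed Γ Δ e φ →
      TypedAlt Γ Δ .wild e z Δs σ φ m
  | alt0 {Γ Δ e z Δs σ φ m K fields} :
      (∀ f ∈ fields, f.2.1 = Mult.many) →
      Typed ((GCtx.zeroUsage Γ z (LCtx.names (LCtx.flats Δs)))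
               ++ fields.map fun f => GEntry.unr f.1 f.2.2)
            (LCtx.removeNames Δ (LCtx.names (LCtx.flats Δs))) e φ →
      TypedAlt Γ Δ (.con K fields) e z Δs σ φ m
  | altNwhnf {Γ Δ e z Δs σ φ K fields} :
      0 < (fields.filter fun f => f.2.1 == Mult.one).length →
      (fields.filter fun f => f.2.1 == Mult.one).length = Δs.length →
      Typed (Γ ++ (fields.filter fun f => f.2.1 == Mult.many).map (fun f => GEntry.unr f.1 f.2.2)
               ++ (List.zip (fields.filter fun f => f.2.1 == Mult.one) Δs).map
                    (fun fd => GEntry.dlt fd.1.1 fd.2 fd.1.2.2))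
            Δ e φ →
      TypedAlt Γ Δ (.con K fields) e z Δs σ φ .whnf
  | altNnwhnf {Γ Δ e z Δs σ φ K fields} :
      0 < (fields.filter fun f => f.2.1 == Mult.one).length →
      Typed (Γ ++ (fields.filter fun f => f.2.1 == Mult.many).map (fun f => GEntry.unr f.1 f.2.2)
               ++ (((fields.filter fun f => f.2.1 == Mult.one).zipIdx).map Prod.swap).map
                    (fun fi => GEntry.dlt fi.2.1
                       ((LCtx.flats Δs).map fun en => { en with tag := some (K, fi.1) })
                       fi.2.2.2))
            Δ e φ →
      TypedAlt Γ Δ (.con K fields) e z Δs σ φ .nwhnf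
end


/-! Auxiliary lemmas -/

theorem MultWF_unr_to_dlt {Γ₁ Γ₂ : GCtx} {x : Name} {σ : Ty} {π : Mult}
    (h : MultWF (Γ₁ ++ GEntry.unr x σ :: Γ₂) π) :
    MultWF (Γ₁ ++ GEntry.dlt x [] σ :: Γ₂) π := by
  cases h with
  | one => exact .one
  | many => exact .many
  | mvar hm =>
    refine .mvar ?_
    rcases List.mem_append.mp hm with h1 | h2
    · exact List.mem_append.mpr (Or.inl h1)
    · rcases List.mem_cons.mp h2 with h3 | h4
      · cases h3
      · exact List.mem_append.mpr (Or.inr (List.mem_cons.mpr (Or.inr h4)))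

/-- A Δ-bound variable with empty usage environment is interchangeable with
an unrestricted variable (one direction, enough for β with sharing). -/
theorem unr_to_dlt {x : Name} {σ : Ty} :
    ∀ {Γ : GCtx} {Δ : LCtx} {e : Expr} {φ : Ty}, Typed Γ Δ e φ →
      ∀ Γ₁ Γ₂, Γ = Γ₁ ++ GEntry.unr x σ :: Γ₂ →
        Typed (Γ₁ ++ GEntry.dlt x [] σ :: Γ₂) Δ e φ := by
  intro Γ Δ e φ h
  refine Typed.rec
    (motive_1 := fun Γ Δ e φ _ => ∀ Γ₁ Γ₂, Γ = Γ₁ ++ GEntry.unr x σ :: Γ₂ →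
      Typed (Γ₁ ++ GEntry.dlt x [] σ :: Γ₂) Δ e φ)
    (motive_2 := fun Γ Δ e φ Δs _ => ∀ Γ₁ Γ₂, Γ = Γ₁ ++ GEntry.unr x σ :: Γ₂ →
      TypedWHNF (Γ₁ ++ GEntry.dlt x [] σ :: Γ₂) Δ e φ Δs)
    (motive_3 := fun Γ args Δs _ => ∀ Γ₁ Γ₂, Γ = Γ₁ ++ GEntry.unr x σ :: Γ₂ →
      ArgsTyped (Γ₁ ++ GEntry.dlt x [] σ :: Γ₂) args Δs)
    (motive_4 := fun Γ Δ ρ e z Δs σ' φ m _ => ∀ Γ₁ Γ₂, Γ = Γ₁ ++ GEntry.unr x σ :: Γ₂ →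
      TypedAlt (Γ₁ ++ GEntry.dlt x [] σ :: Γ₂) Δ ρ e z Δs σ' φ m)
    ?_ ?_ ?_ ?_ ?_ ?_ ?_ ?_ ?_ ?_ ?_ ?_ ?_ ?_ ?_ ?_ ?_ ?_ ?_ ?_ ?_ ?_ ?_ ?_ ?_ ?_ ?_ h
  -- 1 var1
  · intro Γ0 y τ Γ₁ Γ₂ heq
    exact Typed.var1 _ y τ
  -- 2 varw
  · intro Γ0 y τ hmem Γ₁ Γ₂ heq; subst heq
    rcases List.mem_append.mp hmem with h1 | h2
    · exact .varw (List.mem_append.mpr (Or.inl h1))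
    · rcases List.mem_cons.mp h2 with h3 | h4
      · injection h3 with hy hτ; subst hy; subst hτ
        exact .vard (List.mem_append.mpr (Or.inr (List.mem_cons.mpr (Or.inl rfl))))
      · exact .varw (List.mem_append.mpr (Or.inr (List.mem_cons.mpr (Or.inr h4))))
  -- 3 vard
  · intro Γ0 y u τ hmem Γ₁ Γ₂ heq; subst heq
    rcases List.mem_append.mp hmem with h1 | h2
    · exact .vard (List.mem_append.mpr (Or.inl h1))
    · rcases List.mem_cons.mp h2 with h3 | h4
      · cases h3
      · exact .vard (List.mem_append.mpr (Or.inr (List.mem_cons.mpr (Or.inr h4))))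
  -- 4 split
  · intro Γ0 Δ₁ Δ₂ e0 τ en K n htag hT ih Γ₁ Γ₂ heq
    exact .split en K n htag (ih Γ₁ Γ₂ heq)
  -- 5 lamI1
  · intro Γ0 Δ0 y τ b φ0 hT ih Γ₁ Γ₂ heq
    exact .lamI1 (ih Γ₁ Γ₂ heq)
  -- 6 lamIw
  · intro Γ0 Δ0 y τ b φ0 hT ih Γ₁ Γ₂ heq; subst heq
    refine .lamIw ?_
    have := ih Γ₁ (Γ₂ ++ [GEntry.unr y τ]) (by simp)
    simpa using this
  -- 7 lamIp
  · intro Γ0 Δ0 y τ b φ0 p hT ih Γ₁ Γ₂ heq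
    exact .lamIp (ih Γ₁ Γ₂ heq)
  -- 8 appE1
  · intro Γ0 Δ₁ Δ₂ a b τ φ0 h1 h2 ih1 ih2 Γ₁ Γ₂ heq
    exact .appE1 (ih1 Γ₁ Γ₂ heq) (ih2 Γ₁ Γ₂ heq)
  -- 9 appEw
  · intro Γ0 Δ0 a b τ φ0 h1 h2 ih1 ih2 Γ₁ Γ₂ heq
    exact .appEw (ih1 Γ₁ Γ₂ heq) (ih2 Γ₁ Γ₂ heq)
  -- 10 appEp
  · intro Γ0 Δ₁ Δ₂ a b τ φ0 p h1 h2 ih1 ih2 Γ₁ Γ₂ heq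
    exact .appEp (ih1 Γ₁ Γ₂ heq) (ih2 Γ₁ Γ₂ heq)
  -- 11 mlamI
  · intro Γ0 Δ0 p b τ hT ih Γ₁ Γ₂ heq; subst heq
    refine .mlamI ?_
    have := ih Γ₁ (Γ₂ ++ [GEntry.mvar p]) (by simp)
    simpa using this
  -- 12 mappE
  · intro Γ0 Δ0 p b τ π hT hwf ih Γ₁ Γ₂ heq; subst heq
    exact .mappE (ih Γ₁ Γ₂ rfl) (MultWF_unr_to_dlt hwf)
  -- 13 unitI
  · intro Γ0 Γ₁ Γ₂ heq
    exact .unitI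
  -- 14 pairI
  · intro Γ0 Δ₁ Δ₂ a b τ₁ τ₂ h1 h2 ih1 ih2 Γ₁ Γ₂ heq
    exact .pairI (ih1 Γ₁ Γ₂ heq) (ih2 Γ₁ Γ₂ heq)
  -- 15 lett
  · intro Γ0 Δ0 Δ' y τ r b φ0 h1 h2 ih1 ih2 Γ₁ Γ₂ heq; subst heq
    refine .lett (ih1 Γ₁ Γ₂ rfl) ?_
    have := ih2 Γ₁ (Γ₂ ++ [GEntry.dlt y Δ0 τ]) (by simp)
    simpa using this
  -- 16 letrec
  · intro Γ0 Δ0 Δ' binds b φ0 hΔ hTs hT ih1 ih2 Γ₁ Γ₂ heq; subst heq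
    refine .letrec hΔ ?_ ?_
    · intro bi hbi
      have := ih1 bi hbi Γ₁ (Γ₂ ++ binds.map fun bi => GEntry.dlt bi.1 bi.2.1 bi.2.2.1) (by simp)
      simpa using this
    · have := ih2 Γ₁ (Γ₂ ++ binds.map fun bi => GEntry.dlt bi.1 bi.2.1 bi.2.2.1) (by simp)
      simpa using this
  -- 17 caseWHNF
  · intro Γ0 Δ0 Δ' s z τ φ0 alts Δs hw hT halts hnalts ihT ihm ihn Γ₁ Γ₂ heq; subst heq
    refine .caseWHNF Δs hw (ihT Γ₁ Γ₂ rfl) ?_ ?_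
    · intro a ha hm
      have := ihm a ha hm Γ₁ (Γ₂ ++ [GEntry.dlt z Δ0 τ]) (by simp)
      simpa using this
    · intro a ha hm
      have := ihn a ha hm Γ₁ (Γ₂ ++ [GEntry.dlt z (LCtx.irrelevant Δ0) τ]) (by simp)
      simpa using this
  -- 18 caseNWHNF
  · intro Γ0 Δ0 Δ' s z τ φ0 alts hnw hT halts ih1 ih2 Γ₁ Γ₂ heq; subst heq
    refine .caseNWHNF hnw (ih1 Γ₁ Γ₂ rfl) ?_
    intro a ha
    have := ih2 a ha Γ₁ (Γ₂ ++ [GEntry.dlt z (LCtx.irrelevant Δ0) τ]) (by simp)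
    simpa using this
  -- 19 whnf lam
  · intro Γ0 Δ0 y π τ b τ2 hT ih Γ₁ Γ₂ heq
    exact .lam (ih Γ₁ Γ₂ heq)
  -- 20 whnf con
  · intro Γ0 K args τ Δs hargs ih Γ₁ Γ₂ heq
    exact .con (ih Γ₁ Γ₂ heq)
  -- 21 args nil
  · intro Γ0 Γ₁ Γ₂ heq
    exact .nil
  -- 22 args unr
  · intro Γ0 b τ args Δs h1 h2 ih1 ih2 Γ₁ Γ₂ heq
    exact .unr (ih1 Γ₁ Γ₂ heq) (ih2 Γ₁ Γ₂ heq)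
  -- 23 args lin
  · intro Γ0 Δ0 b τ args Δs h1 h2 ih1 ih2 Γ₁ Γ₂ heq
    exact .lin (ih1 Γ₁ Γ₂ heq) (ih2 Γ₁ Γ₂ heq)
  -- 24 alt wild
  · intro Γ0 Δ0 b z Δs τ φ0 m hT ih Γ₁ Γ₂ heq
    exact .wild (ih Γ₁ Γ₂ heq)
  -- 25 alt0
  · intro Γ0 Δ0 b z Δs τ φ0 m K fields hmany hT ih Γ₁ Γ₂ heq; subst heq
    refine .alt0 hmany ?_
    have := ih (GCtx.zeroUsage Γ₁ z (LCtx.names (LCtx.flats Δs)))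
      (GCtx.zeroUsage Γ₂ z (LCtx.names (LCtx.flats Δs)) ++ fields.map fun f => GEntry.unr f.1 f.2.2)
      (by simp [GCtx.zeroUsage, LCtx.removeNames])
    simpa [GCtx.zeroUsage, LCtx.removeNames] using this
  -- 26 altNwhnf
  · intro Γ0 Δ0 b z Δs τ φ0 K fields hpos hlen hT ih Γ₁ Γ₂ heq; subst heq
    refine .altNwhnf hpos hlen ?_
    have := ih Γ₁
      (Γ₂ ++ (fields.filter fun f => f.2.1 == Mult.many).map (fun f => GEntry.unr f.1 f.2.2)
          ++ (List.zip (fields.filter fun f => f.2.1 == Mult.one) Δs).map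
               (fun fd => GEntry.dlt fd.1.1 fd.2 fd.1.2.2)) (by simp)
    simpa using this
  -- 27 altNnwhnf
  · intro Γ0 Δ0 b z Δs τ φ0 K fields hpos hT ih Γ₁ Γ₂ heq; subst heq
    refine .altNnwhnf hpos ?_
    have := ih Γ₁
      (Γ₂ ++ (fields.filter fun f => f.2.1 == Mult.many).map (fun f => GEntry.unr f.1 f.2.2)
          ++ (((fields.filter fun f => f.2.1 == Mult.one).zipIdx).map Prod.swap).map
               (fun fi => GEntry.dlt fi.2.1
                  ((LCtx.flats Δs).map fun en => { en with tag := some (K, fi.1) })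
                  fi.2.2.2)) (by simp)
    simpa using this

/-- Inversion for unrestricted lambdas (through `split`). -/
theorem lam_many_inv :
    ∀ {Γ : GCtx} {Δ : LCtx} {f : Expr} {τ : Ty}, Typed Γ Δ f τ →
      ∀ x σ e, f = Expr.lam x Mult.many σ e →
        ∃ φ, τ = Ty.arrow σ Mult.many φ ∧ Typed (Γ ++ [GEntry.unr x σ]) Δ e φ := by
  intro Γ Δ f τ h
  refine Typed.rec
    (motive_1 := fun Γ Δ f τ _ => ∀ x σ e, f = Expr.lam x Mult.many σ e →
      ∃ φ, τ = Ty.arrow σ Mult.many φ ∧ Typed (Γ ++ [GEntry.unr x σ]) Δ e φ)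
    (motive_2 := fun _ _ _ _ _ _ => True)
    (motive_3 := fun _ _ _ _ => True)
    (motive_4 := fun _ _ _ _ _ _ _ _ _ _ => True)
    ?_ ?_ ?_ ?_ ?_ ?_ ?_ ?_ ?_ ?_ ?_ ?_ ?_ ?_ ?_ ?_ ?_ ?_ ?_ ?_ ?_ ?_ ?_ ?_ ?_ ?_ ?_ h
  · intro _ _ _ _ _ _ heq; cases heq
  · intro _ _ _ _ _ _ _ heq; cases heq
  · intro _ _ _ _ _ _ _ _ heq; cases heq
  · intro Γ0 Δ₁ Δ₂ e0 τ0 en K n htag hT ih y σ' b heq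
    obtain ⟨φ, hφ, hT'⟩ := ih y σ' b heq
    exact ⟨φ, hφ, .split en K n htag hT'⟩
  · intro _ _ _ _ _ _ _ _ _ _ _ heq; injection heq with h1 h2 h3 h4; cases h2
  · intro Γ0 Δ0 y τ0 b φ0 hT ih y' σ' b' heq
    injection heq with h1 h2 h3 h4
    subst h1; subst h3; subst h4
    exact ⟨φ0, rfl, hT⟩
  · intro _ _ _ _ _ _ _ _ _ _ _ _ heq; injection heq with h1 h2 h3 h4; cases h2
  · intro _ _ _ _ _ _ _ _ _ _ _ _ _ _ heq; cases heq
  · intro _ _ _ _ _ _ _ _ _ _ _ _ _ heq; cases heq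
  · intro _ _ _ _ _ _ _ _ _ _ _ _ _ _ _ heq; cases heq
  · intro _ _ _ _ _ _ _ _ _ _ heq; cases heq
  · intro _ _ _ _ _ _ _ _ _ _ _ _ heq; cases heq
  · intro _ _ _ _ heq; cases heq
  · intro _ _ _ _ _ _ _ _ _ _ _ _ _ _ heq; cases heq
  · intro _ _ _ _ _ _ _ _ _ _ _ _ _ _ _ heq; cases heq
  · intro _ _ _ _ _ _ _ _ _ _ _ _ _ _ heq; cases heq
  · intro _ _ _ _ _ _ _ _ _ _ _ _ _ _ _ _ _ _ _ heq; cases heq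
  · intro _ _ _ _ _ _ _ _ _ _ _ _ _ _ _ _ heq; cases heq
  · intros; trivial
  · intros; trivial
  · intros; trivial
  · intros; trivial
  · intros; trivial
  · intros; trivial
  · intros; trivial
  · intros; trivial
  · intros; trivial


theorem beta_reduction_sharing_preserves_typing
    (Γ : GCtx) (Δ : LCtx) (x : Name) (σ φ : Ty) (e e' : Expr)
    (h : Typed Γ Δ (Expr.app (Expr.lam x Mult.many σ e) e') φ) :
    Typed Γ Δ (Expr.lett x [] σ e' e) φ := by
  have main : ∀ {Γ' : GCtx} {Δ' : LCtx} {f : Expr} {φ' : Ty}, Typed Γ' Δ' f φ' →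
      ∀ e0 e1, f = Expr.app (Expr.lam x Mult.many σ e0) e1 →
        Typed Γ' Δ' (Expr.lett x [] σ e1 e0) φ' := by
    intro Γ' Δ' f φ' h
    refine Typed.rec
      (motive_1 := fun Γ' Δ' f φ' _ => ∀ e0 e1, f = Expr.app (Expr.lam x Mult.many σ e0) e1 →
        Typed Γ' Δ' (Expr.lett x [] σ e1 e0) φ')
      (motive_2 := fun _ _ _ _ _ _ => True)
      (motive_3 := fun _ _ _ _ => True)
      (motive_4 := fun _ _ _ _ _ _ _ _ _ _ => True)
      ?_ ?_ ?_ ?_ ?_ ?_ ?_ ?_ ?_ ?_ ?_ ?_ ?_ ?_ ?_ ?_ ?_ ?_ ?_ ?_ ?_ ?_ ?_ ?_ ?_ ?_ ?_ h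
    · intro _ _ _ _ _ heq; cases heq
    · intro _ _ _ _ _ _ heq; cases heq
    · intro _ _ _ _ _ _ _ heq; cases heq
    -- split
    · intro Γ0 Δ₁ Δ₂ e0 τ0 en K n htag hT ih a b heq
      exact .split en K n htag (ih a b heq)
    · intro _ _ _ _ _ _ _ _ _ _ heq; cases heq
    · intro _ _ _ _ _ _ _ _ _ _ heq; cases heq
    · intro _ _ _ _ _ _ _ _ _ _ _ heq; cases heq
    -- appE1
    · intro Γ0 Δ₁ Δ₂ a b τ φ0 h1 h2 ih1 ih2 e0 e1 heq
      injection heq with hfa hfb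
      subst hfa; subst hfb
      obtain ⟨φ1, hφ, _⟩ := lam_many_inv h1 x σ e0 rfl
      injection hφ with _ hm _
      cases hm
    -- appEw
    · intro Γ0 Δ0 a b τ φ0 h1 h2 ih1 ih2 e0 e1 heq
      injection heq with hfa hfb
      subst hfa; subst hfb
      obtain ⟨φ1, hφ, hT⟩ := lam_many_inv h1 x σ e0 rfl
      injection hφ with hσ hm hφ2
      have h2' : Typed Γ0 [] b σ := hσ ▸ h2
      have hT' := unr_to_dlt hT Γ0 [] rfl
      have hT'' : Typed (Γ0 ++ [GEntry.dlt x [] σ]) Δ0 e0 φ0 := by rw [hφ2]; exact hT'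
      exact Typed.lett (Δ := []) (Δ' := Δ0) h2' hT''
    -- appEp
    · intro Γ0 Δ₁ Δ₂ a b τ φ0 p h1 h2 ih1 ih2 e0 e1 heq
      injection heq with hfa hfb
      subst hfa; subst hfb
      obtain ⟨φ1, hφ, _⟩ := lam_many_inv h1 x σ e0 rfl
      injection hφ with _ hm _
      cases hm
    · intro _ _ _ _ _ _ _ _ _ heq; cases heq
    · intro _ _ _ _ _ _ _ _ _ _ _ heq; cases heq
    · intro _ _ _ heq; cases heq
    · intro _ _ _ _ _ _ _ _ _ _ _ _ _ heq; cases heq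
    · intro _ _ _ _ _ _ _ _ _ _ _ _ _ _ heq; cases heq
    · intro _ _ _ _ _ _ _ _ _ _ _ _ _ heq; cases heq
    · intro _ _ _ _ _ _ _ _ _ _ _ _ _ _ _ _ _ _ heq; cases heq
    · intro _ _ _ _ _ _ _ _ _ _ _ _ _ _ _ heq; cases heq
    · intros; trivial
    · intros; trivial
    · intros; trivial
    · intros; trivial
    · intros; trivial
    · intros; trivial
    · intros; trivial
    · intros; trivial
    · intros; trivial
  exact main h e e' rfl
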